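/- arXiv:1803.05551 — 6 statements merged into one kernel-verified Lean document; each statement's English description precedes it below -/
import Mathlib

section
/- Let d ≥ 1 and let K be a field whose characteristic is 0 or greater than d. If H ∈ K[x_1,…,x_n]^m is a homogeneous polynomial map of degree d with rk JH ≤ 1, then the components of H are pairwise linearly dependent over K, i.e., for all i, j there exist (λ,μ) ≠ (0,0) in K² with λH_i + μH_j = 0. -/
/-!
Rank at most one means every 2×2 minor `∂ₖHᵢ ∂ₗHⱼ - ∂ₗHᵢ ∂ₖHⱼ` vanishes. Multiplying by `xₗ`,
summing over `l` and applying Euler's identity `∑ xₗ ∂ₗH = d H` gives `∂ₖHᵢ · Hⱼ = ∂ₖHⱼ · Hᵢ`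
once `d ≠ 0` in `K`. After cancelling `c = gcd(Hᵢ, Hⱼ)`, the coprime cofactors `f, g` still satisfy
`∂ₖf · g = ∂ₖg · f`, so `f ∣ ∂ₖf`, which forces `∂ₖf = 0` by degree. A polynomial of degree at
most `d` with vanishing partial derivatives is constant when `1, …, d` are nonzero in `K`, hence
`Hᵢ` and `Hⱼ` are both constant multiples of `c`.
-/

open MvPolynomial

/-- The Jacobian matrix of a polynomial map. -/
noncomputable def jac {K : Type*} [CommRing K] {m n : ℕ}
    (H : Fin m → MvPolynomial (Fin n) K) :
    Matrix (Fin m) (Fin n) (MvPolynomial (Fin n) K) :=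
  Matrix.of fun i j => pderiv j (H i)

/-- The rank of the Jacobian matrix, taken over the rational function field. -/
noncomputable def jacRank {K : Type*} [Field K] {m n : ℕ}
    (H : Fin m → MvPolynomial (Fin n) K) : ℕ :=
  ((jac H).map (algebraMap (MvPolynomial (Fin n) K)
    (FractionRing (MvPolynomial (Fin n) K)))).rank

theorem Matrix.mul_eq_mul_of_rank_le_one {R m n : Type*} [Fintype n] [CommRing R] [IsDomain R]
    (A : Matrix m n R) (hA : A.rank ≤ 1) (i j : m) (k l : n) :
    A i k * A j l = A i l * A j k := by
  by_contra h
  have hdet : (A.submatrix ![i, j] ![k, l]).det ≠ 0 := by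
    rw [Matrix.det_fin_two]; simpa [sub_eq_zero] using h
  have := A.rank_submatrix_le ![i, j] ![k, l]
  rw [Matrix.rank_of_det_ne_zero hdet, Fintype.card_fin] at this
  omega

theorem natCast_ne_zero_of_ringChar {R : Type*} [NonAssocSemiring R] {d e : ℕ}
    (hchar : ringChar R = 0 ∨ d < ringChar R) (he : e ≠ 0) (hed : e ≤ d) : (e : R) ≠ 0 := by
  rw [Ne, ringChar.spec]
  intro hdvd
  rcases hchar with h | h
  · rw [h, zero_dvd_iff] at hdvd
    exact he hdvd
  · exact absurd (Nat.le_of_dvd (Nat.pos_of_ne_zero he) hdvd) (by omega)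

-- The expression `D f * g - D g * f` picks up the factor `c ^ 2` under `f, g ↦ c * f, c * g`.
theorem Derivation.mul_eq_mul_of_mul_left {R A : Type*} [CommRing R] [CommRing A] [IsDomain A]
    [Algebra R A] (D : Derivation R A A) {c f g : A} (hc : c ≠ 0)
    (h : D (c * f) * (c * g) = D (c * g) * (c * f)) : D f * g = D g * f := by
  rw [D.leibniz, D.leibniz] at h
  simp only [smul_eq_mul] at h
  refine mul_left_cancel₀ (mul_ne_zero hc hc) ?_
  linear_combination h

namespace MvPolynomial

variable {R σ : Type*} [CommRing R]

theorem totalDegree_pderiv_lt {p : MvPolynomial σ R} {i : σ} (h : pderiv i p ≠ 0) :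
    (pderiv i p).totalDegree < p.totalDegree := by
  classical
  obtain ⟨m, hm, hmax⟩ := Finset.exists_mem_eq_sup _ (support_nonempty.mpr h)
    fun s => s.sum fun _ e => e
  have hcoeff : coeff (m + Finsupp.single i 1) p ≠ 0 := by
    intro h0
    rw [mem_support_iff, coeff_pderiv, h0, zero_mul] at hm
    exact hm rfl
  have := le_totalDegree (mem_support_iff.mpr hcoeff)
  rw [Finsupp.sum_add_index' (fun _ => rfl) (fun _ _ _ => rfl),
    Finsupp.sum_single_index rfl] at this
  rw [totalDegree, hmax]
  omega

theorem pderiv_eq_zero_of_dvd [IsDomain R] {p : MvPolynomial σ R} {i : σ}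
    (h : p ∣ pderiv i p) : pderiv i p = 0 := by
  by_contra hne
  exact (totalDegree_pderiv_lt hne).not_ge (totalDegree_le_of_dvd_of_isDomain h hne)

theorem pderiv_eq_zero_of_isRelPrime [IsDomain R] [UniqueFactorizationMonoid R]
    {p q : MvPolynomial σ R} {i : σ} (hpq : IsRelPrime p q)
    (h : pderiv i p * q = pderiv i q * p) : pderiv i p = 0 :=
  pderiv_eq_zero_of_dvd (hpq.dvd_of_dvd_mul_right ⟨pderiv i q, h.trans (mul_comm _ _)⟩)

theorem eq_C_of_forall_pderiv_eq_zero [IsDomain R] {p : MvPolynomial σ R}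
    (hchar : ∀ e : ℕ, e ≠ 0 → e ≤ p.totalDegree → (e : R) ≠ 0) (hp : ∀ i, pderiv i p = 0) :
    p = C (coeff 0 p) := by
  classical
  refine totalDegree_eq_zero_iff_eq_C.mp (Finset.sup_eq_bot_iff _ _ |>.mpr fun m hm => ?_)
  by_contra hm0
  obtain ⟨k, -, hk⟩ := Finset.exists_ne_zero_of_sum_ne_zero (s := m.support) (f := m) hm0
  have hle : Finsupp.single k 1 ≤ m := Finsupp.single_le_iff.mpr (Nat.one_le_iff_ne_zero.mpr hk)
  have hcoeff := coeff_pderiv (i := k) p (m - Finsupp.single k 1)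
  have hmk : ((m - Finsupp.single k 1 : σ →₀ ℕ) k : R) + 1 = m k := by
    rw [Finsupp.tsub_apply, Finsupp.single_eq_same, Nat.cast_sub (Nat.one_le_iff_ne_zero.mpr hk),
      Nat.cast_one, sub_add_cancel]
  rw [hp k, coeff_zero, tsub_add_cancel_of_le hle, hmk, eq_comm] at hcoeff
  have hkdeg : m k ≤ p.totalDegree :=
    (Finset.single_le_sum (fun _ _ => Nat.zero_le _) (Finsupp.mem_support_iff.mpr hk)).trans
      (le_totalDegree hm)
  exact mem_support_iff.mp hm ((mul_eq_zero.mp hcoeff).resolve_right (hchar _ hk hkdeg))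

theorem IsHomogeneous.pderiv_mul_eq_pderiv_mul [Fintype σ] [IsDomain R]
    {f g : MvPolynomial σ R} {d : ℕ} (hf : f.IsHomogeneous d) (hg : g.IsHomogeneous d)
    (hd : (d : R) ≠ 0)
    (hminor : ∀ k l, pderiv k f * pderiv l g = pderiv l f * pderiv k g) (k : σ) :
    pderiv k f * g = pderiv k g * f := by
  have hd' : (d : MvPolynomial σ R) ≠ 0 := by
    rwa [← map_natCast C, Ne, C_eq_zero]
  refine mul_left_cancel₀ hd' ?_
  calc (d : MvPolynomial σ R) * (pderiv k f * g) = pderiv k f * (d • g) := by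
        rw [nsmul_eq_mul]; ring
    _ = ∑ l, X l * (pderiv k f * pderiv l g) := by
        rw [← hg.sum_X_mul_pderiv, Finset.mul_sum]
        exact Finset.sum_congr rfl fun l _ => mul_left_comm _ _ _
    _ = ∑ l, X l * (pderiv l f * pderiv k g) := by simp_rw [hminor]
    _ = pderiv k g * (d • f) := by
        rw [← hf.sum_X_mul_pderiv, Finset.mul_sum]
        exact Finset.sum_congr rfl fun l _ => by ring
    _ = d * (pderiv k g * f) := by
        rw [nsmul_eq_mul]; ring

theorem exists_smul_add_smul_eq_zero_of_pderiv_mul_eq [IsDomain R] [UniqueFactorizationMonoid R]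
    {f g : MvPolynomial σ R} {d : ℕ} (hchar : ∀ e : ℕ, e ≠ 0 → e ≤ d → (e : R) ≠ 0)
    (hf : f.totalDegree ≤ d) (hg : g.totalDegree ≤ d)
    (h : ∀ i, pderiv i f * g = pderiv i g * f) :
    ∃ a b : R, (a ≠ 0 ∨ b ≠ 0) ∧ a • f + b • g = 0 := by
  by_cases hg0 : g = 0
  · exact ⟨0, 1, Or.inr one_ne_zero, by simp [hg0]⟩
  by_cases hf0 : f = 0
  · exact ⟨1, 0, Or.inl one_ne_zero, by simp [hf0]⟩
  obtain ⟨f₁, g₁, c, hrel, rfl, rfl⟩ := UniqueFactorizationMonoid.exists_reduced_factors f hf0 g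
  have hc : c ≠ 0 := left_ne_zero_of_mul hf0
  have h₁ (i : σ) : pderiv i f₁ * g₁ = pderiv i g₁ * f₁ := (pderiv i).mul_eq_mul_of_mul_left hc (h i)
  have hdeg₁ := (totalDegree_le_of_dvd_of_isDomain (dvd_mul_left f₁ c) hf0).trans hf
  have hdeg₂ := (totalDegree_le_of_dvd_of_isDomain (dvd_mul_left g₁ c) hg0).trans hg
  obtain ⟨a, rfl⟩ : ∃ a, f₁ = C a :=
    ⟨_, eq_C_of_forall_pderiv_eq_zero (fun e he hle => hchar e he (hle.trans hdeg₁))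
      fun i => pderiv_eq_zero_of_isRelPrime hrel (h₁ i)⟩
  obtain ⟨b, rfl⟩ : ∃ b, g₁ = C b :=
    ⟨_, eq_C_of_forall_pderiv_eq_zero (fun e he hle => hchar e he (hle.trans hdeg₂))
      fun i => pderiv_eq_zero_of_isRelPrime hrel.symm (h₁ i).symm⟩
  have ha : a ≠ 0 := fun h0 => hf0 (by rw [h0, C_0, mul_zero])
  refine ⟨b, -a, Or.inr (neg_ne_zero.mpr ha), ?_⟩
  rw [smul_eq_C_mul, smul_eq_C_mul, map_neg]
  ring

end MvPolynomial

theorem pderiv_mul_pderiv_eq_of_jacRank_le_one {K : Type*} [Field K] {m n : ℕ}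
    {H : Fin m → MvPolynomial (Fin n) K} (hrk : jacRank H ≤ 1) (i j : Fin m) (k l : Fin n) :
    pderiv k (H i) * pderiv l (H j) = pderiv l (H i) * pderiv k (H j) := by
  apply IsFractionRing.injective (MvPolynomial (Fin n) K) (FractionRing (MvPolynomial (Fin n) K))
  simpa [jac] using Matrix.mul_eq_mul_of_rank_le_one _ hrk i j k l

/-- Let `d ≥ 1` and `K` a field of characteristic `0` or `> d`. If `H ∈ K[x]^m` is
homogeneous of degree `d` with `rk JH ≤ 1`, then the components of `H` are pairwise
linearly dependent over `K`. -/
theorem rank_le_one_components_pairwise_dependent {K : Type*} [Field K]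
    (d : ℕ) (hd : 1 ≤ d) (hchar : ringChar K = 0 ∨ d < ringChar K)
    {m n : ℕ} (H : Fin m → MvPolynomial (Fin n) K)
    (hhom : ∀ i, (H i).IsHomogeneous d)
    (hrk : jacRank H ≤ 1) :
    ∀ i j : Fin m, ∃ a b : K, (a ≠ 0 ∨ b ≠ 0) ∧ a • H i + b • H j = 0 := by
  intro i j
  have hcast (e : ℕ) (he : e ≠ 0) (hed : e ≤ d) : (e : K) ≠ 0 :=
    natCast_ne_zero_of_ringChar hchar he hed
  refine exists_smul_add_smul_eq_zero_of_pderiv_mul_eq hcast (hhom i).totalDegree_le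
    (hhom j).totalDegree_le fun k => ?_
  exact (hhom i).pderiv_mul_eq_pderiv_mul (hhom j) (hcast d (by omega) le_rfl)
    (pderiv_mul_pderiv_eq_of_jacRank_le_one hrk i j) k
end

section
/- Let K be a field, let H ∈ K[x_1,…,x_n]^m be a polynomial map of degree d, and set r := rk JH. If |K| > (d−1)r and JH · x = 0 (where x = (x_1,…,x_n)^T), then there exist S ∈ GL_m(K) and T ∈ GL_n(K) such that for H̃ := S·H(Tx), the Jacobian matrix J H̃ evaluated at the (r+1)-th standard basis vector e_{r+1} equals the block matrix [[I_r, 0],[0, 0]]. Moreover, the hypothesis |K| > (d−1)r may be weakened to |K| ≥ (d−1)r if every nonzero component of H is homogeneous. -/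
/-!
Because `JH · x = 0`, every point `p` lies in the kernel of `JH(p)`. So it suffices to find a
nonzero `p` at which `JH(p)` keeps the generic rank `r`: bases adapted to `ker JH(p) ∋ p` and to
its image bring `JH(p)` to `[[I_r, 0], [0, 0]]` with `p` as `(r+1)`-th basis vector, and the
chain rule `J(S·H(Tx))(e_{r+1}) = S · JH(T e_{r+1}) · T` concludes. Such a `p` is a point where a
nonzero `r × r` minor of `JH` does not vanish. That minor has degree at most `(d-1)r`, and is
homogeneous when the `H_i` are, whence the bound on `|K|`. The point is nonzero when `r > 0`,
because `JH · x = 0` forces `JH(0) = 0`.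
-/

open MvPolynomial

/-- The polynomial map `S · H(Tx)`. -/
noncomputable def applyST {K : Type*} [CommRing K] {m n : ℕ}
    (S : Matrix (Fin m) (Fin m) K) (T : Matrix (Fin n) (Fin n) K)
    (H : Fin m → MvPolynomial (Fin n) K) : Fin m → MvPolynomial (Fin n) K :=
  fun i => ∑ j, C (S i j) * aeval (fun k => ∑ l, C (T k l) * X l) (H j)

open Module

section NormalForm

variable {K V : Type*} [Field K] [AddCommGroup V] [Module K V]

theorem Module.Basis.exists_apply_eq_of_linearIndependent {ι κ : Type*} [Fintype ι] [Fintype κ]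
    [FiniteDimensional K V] {v : ι → V} (hv : LinearIndependent K v) {e : ι → κ}
    (he : Function.Injective e) (hκ : finrank K V = Fintype.card κ) :
    ∃ b : Basis κ K V, ∀ i, b (e i) = v i := by
  classical
  let b₀ := Basis.sumExtend hv
  have hb₀ : ∀ i, b₀ (Sum.inl i) = v i := fun i => by
    simp only [b₀, Basis.sumExtend, Basis.reindex_apply, Basis.coe_extend]
    rfl
  have : Finite (ι ⊕ Basis.sumExtendIndex hv) := Module.Finite.finite_basis b₀
  have : Finite (Basis.sumExtendIndex hv) :=
    _root_.Finite.of_injective _ (Sum.inr_injective (α := ι))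
  have : Fintype (Basis.sumExtendIndex hv) := Fintype.ofFinite _
  have hcard :
      Fintype.card (Basis.sumExtendIndex hv) = Fintype.card ((Set.range e)ᶜ : Set κ) := by
    have := (finrank_eq_card_basis b₀).symm.trans hκ
    rw [Fintype.card_sum] at this
    rw [Fintype.card_compl_set, Set.card_range_of_injective he]
    omega
  let eq : ι ⊕ Basis.sumExtendIndex hv ≃ κ :=
    (Equiv.sumCongr (Equiv.ofInjective e he) (Fintype.equivOfCardEq hcard)).trans
      (Equiv.Set.sumCompl _)
  refine ⟨b₀.reindex eq, fun i => ?_⟩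
  have : eq.symm (e i) = Sum.inl i := eq.symm_apply_eq.mpr (by simp [eq])
  rw [Basis.reindex_apply, this, hb₀]

theorem Module.Basis.linearIndependent_map_of_ker_le_span {ι W : Type*} [AddCommGroup W]
    [Module K W] (b : Basis ι K V) {f : V →ₗ[K] W} {s t : Set ι} (hst : Disjoint s t)
    (hker : LinearMap.ker f ≤ Submodule.span K (b '' t)) :
    LinearIndependent K (fun i : s => f (b i)) := by
  refine (b.linearIndependent.comp _ Subtype.val_injective).map
    (Disjoint.mono_right hker ?_)
  rw [Set.range_comp, Subtype.range_coe_subtype]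
  exact b.linearIndependent.disjoint_span_image hst

theorem Submodule.exists_basis_fin_of_mem [FiniteDimensional K V] (W : Submodule K V) {n r : ℕ}
    (hn : finrank K V = n) (hW : r + finrank K W = n) {p : V} (hp : p ∈ W) (hp0 : p ≠ 0) :
    ∃ b : Basis (Fin n) K V, (∃ j : Fin n, (j : ℕ) = r ∧ b j = p) ∧
      (∀ j : Fin n, r ≤ (j : ℕ) → b j ∈ W) ∧ W ≤ span K (b '' {j | r ≤ (j : ℕ)}) := by
  have hrn : r < n := by
    have := finrank_pos_iff_exists_ne_zero (R := K).mpr ⟨(⟨p, hp⟩ : W), by simpa using hp0⟩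
    omega
  have hcard : Fintype.card {j : Fin n // r ≤ (j : ℕ)} = n - r := by
    rw [Fintype.card_subtype, show Finset.univ.filter (fun j : Fin n => r ≤ (j : ℕ)) =
      Finset.Ici ⟨r, hrn⟩ by ext; simp [Fin.le_def], Fin.card_Ici]
  obtain ⟨bW, hbW⟩ := Basis.exists_apply_eq_of_linearIndependent
    (linearIndependent_unique_iff.mpr (by simpa using hp0) :
      LinearIndependent K (fun _ : Unit => (⟨p, hp⟩ : W)))
    (e := fun _ => (⟨⟨r, hrn⟩, le_rfl⟩ : {j : Fin n // r ≤ (j : ℕ)}))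
    (Function.injective_of_subsingleton _) (by omega)
  obtain ⟨b, hb⟩ := Basis.exists_apply_eq_of_linearIndependent
    (bW.linearIndependent.map' W.subtype W.ker_subtype) Subtype.val_injective
    (hn.trans (Fintype.card_fin n).symm)
  refine ⟨b, ⟨⟨r, hrn⟩, rfl, by simpa [hbW ()] using hb ⟨⟨r, hrn⟩, le_rfl⟩⟩,
    fun j hj => by simp [hb ⟨j, hj⟩], fun x hx => ?_⟩
  have h := mem_map_of_mem (f := W.subtype)
    (bW.span_eq ▸ mem_top : (⟨x, hx⟩ : W) ∈ span K (Set.range bW))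
  rw [map_span, ← Set.range_comp] at h
  refine span_mono ?_ h
  rintro _ ⟨k, rfl⟩
  exact ⟨k, k.2, hb k⟩

open LinearMap in
theorem LinearMap.exists_basis_toMatrix_eq {W : Type*} [AddCommGroup W] [Module K W]
    [FiniteDimensional K V] [FiniteDimensional K W] (f : V →ₗ[K] W) {m n : ℕ}
    (hn : finrank K V = n) (hm : finrank K W = m) {p : V} (hp : p ∈ ker f) (hp0 : p ≠ 0) :
    ∃ (b : Basis (Fin n) K V) (c : Basis (Fin m) K W),
      (∃ j : Fin n, (j : ℕ) = finrank K (range f) ∧ b j = p) ∧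
      toMatrix b c f = Matrix.of fun (i : Fin m) (j : Fin n) =>
        if (i : ℕ) = j ∧ (i : ℕ) < finrank K (range f) then 1 else 0 := by
  set r := finrank K (range f)
  have hrm : r ≤ m := hm ▸ Submodule.finrank_le _
  obtain ⟨b, hbp, hb_mem, hb_span⟩ := (ker f).exists_basis_fin_of_mem hn
    (hn ▸ finrank_range_add_finrank_ker f) hp hp0
  have hfb := b.linearIndependent_map_of_ker_le_span (s := {j | (j : ℕ) < r})
    (Set.disjoint_left.mpr fun j (hj : (j : ℕ) < r) (hj' : r ≤ (j : ℕ)) => by omega) hb_span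
  obtain ⟨c, hc⟩ := Basis.exists_apply_eq_of_linearIndependent hfb
    (e := fun j => (⟨j, j.2.trans_le hrm⟩ : Fin m)) (fun j j' h => by ext; simpa using h)
    (hm.trans (Fintype.card_fin m).symm)
  refine ⟨b, c, hbp, ?_⟩
  ext i j
  rw [toMatrix_apply, Matrix.of_apply]
  by_cases hj : (j : ℕ) < r
  · rw [← hc ⟨j, hj⟩, c.repr_self, Finsupp.single_apply]
    simp only [Fin.ext_iff, eq_comm]
    grind
  · simp only [mem_ker.mp (hb_mem j (not_lt.mp hj)), map_zero, Finsupp.coe_zero, Pi.zero_apply]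
    grind

open Matrix in
theorem Matrix.exists_mul_mul_eq_of_mulVec_eq_zero {m n : ℕ} (A : Matrix (Fin m) (Fin n) K)
    {p : Fin n → K} (hp0 : p ≠ 0) (hAp : A *ᵥ p = 0) :
    ∃ (S : GL (Fin m) K) (T : GL (Fin n) K),
      (T : Matrix (Fin n) (Fin n) K) *ᵥ (fun k => if (k : ℕ) = A.rank then 1 else 0) = p ∧
      (S : Matrix (Fin m) (Fin m) K) * A * (T : Matrix (Fin n) (Fin n) K) =
        Matrix.of fun (i : Fin m) (j : Fin n) =>
          if (i : ℕ) = j ∧ (i : ℕ) < A.rank then 1 else 0 := by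
  obtain ⟨b, c, hb, hbc⟩ := A.mulVecLin.exists_basis_toMatrix_eq
    (Module.finrank_fin_fun K) (Module.finrank_fin_fun K) hAp hp0
  rw [← Matrix.rank] at hb hbc
  refine ⟨⟨c.toMatrix (Pi.basisFun K _), (Pi.basisFun K _).toMatrix c,
    c.toMatrix_mul_toMatrix_flip _, Basis.toMatrix_mul_toMatrix_flip _ _⟩,
    ⟨(Pi.basisFun K _).toMatrix b, b.toMatrix (Pi.basisFun K _),
    Basis.toMatrix_mul_toMatrix_flip _ _, b.toMatrix_mul_toMatrix_flip _⟩, ?_, ?_⟩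
  · obtain ⟨j, hj, hbj⟩ := hb
    ext i
    simp only [mulVec, dotProduct, ← hj, ← Fin.ext_iff]
    simp [Basis.toMatrix_apply, hbj]
  · rw [← hbc, ← basis_toMatrix_mul_linearMap_toMatrix_mul_basis_toMatrix b (Pi.basisFun K _) c
      (Pi.basisFun K _)]
    congr
    ext i j
    simp [LinearMap.toMatrix_apply]

end NormalForm

namespace Matrix

variable {F : Type*} [Field F] {m n : Type*}

theorem le_rank_of_det_submatrix_ne_zero [Fintype m] [Fintype n] (B : Matrix m n F) {k : ℕ}
    (s : Fin k → m) (t : Fin k → n) (h : (B.submatrix s t).det ≠ 0) : k ≤ B.rank := by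
  simpa [rank_of_det_ne_zero h] using B.rank_submatrix_le s t

theorem exists_linearIndependent_col_of_le_rank [Fintype n] (B : Matrix m n F) {k : ℕ}
    (hk : k ≤ B.rank) :
    ∃ t : Fin k → n, LinearIndependent F (B.submatrix id t).col := by
  obtain ⟨κ, a, ha, hspan, hli⟩ := exists_linearIndependent' F B.col
  have : Fintype κ := Fintype.ofInjective a ha
  have hκ : k ≤ Fintype.card κ := by
    rwa [B.rank_eq_finrank_span_cols, ← hspan, finrank_span_eq_card hli] at hk
  obtain ⟨ι⟩ := Function.Embedding.nonempty_of_card_le (α := Fin k) (by simpa using hκ)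
  exact ⟨a ∘ ι, hli.comp ι ι.injective⟩

theorem exists_det_submatrix_ne_zero_of_le_rank [Fintype m] [Fintype n] (B : Matrix m n F)
    {k : ℕ} (hk : k ≤ B.rank) :
    ∃ (s : Fin k → m) (t : Fin k → n), (B.submatrix s t).det ≠ 0 := by
  obtain ⟨t, ht⟩ := B.exists_linearIndependent_col_of_le_rank hk
  have hrank : (B.submatrix id t)ᵀ.rank = k := by
    simpa using ht.rank_matrix
  obtain ⟨s, hs⟩ := (B.submatrix id t)ᵀ.exists_linearIndependent_col_of_le_rank hrank.ge
  refine ⟨s, t, ?_⟩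
  rwa [show (B.submatrix id t)ᵀ.submatrix id s = (B.submatrix s t)ᵀ from rfl,
    linearIndependent_cols_iff_isUnit, isUnit_iff_isUnit_det, det_transpose,
    isUnit_iff_ne_zero] at hs

theorem det_submatrix_map {R S : Type*} [CommRing R] [CommRing S] (P : Matrix m n R)
    (φ : R →+* S) {k : ℕ} (s : Fin k → m) (t : Fin k → n) :
    ((P.map φ).submatrix s t).det = φ (P.submatrix s t).det :=
  (RingHom.map_det φ _).symm

theorem rank_map_le_rank_map_of_injective [Fintype m] [Fintype n] {R L : Type*} [CommRing R]
    [Field L] (P : Matrix m n R) (φ : R →+* F) {ψ : R →+* L} (hψ : Function.Injective ψ) :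
    (P.map φ).rank ≤ (P.map ψ).rank := by
  obtain ⟨s, t, h⟩ := (P.map φ).exists_det_submatrix_ne_zero_of_le_rank le_rfl
  refine (P.map ψ).le_rank_of_det_submatrix_ne_zero s t ?_
  rw [det_submatrix_map] at h ⊢
  exact (map_ne_zero_iff ψ hψ).mpr fun h0 => h (by rw [h0, map_zero])

end Matrix

section Polynomial

variable {R σ : Type*} [CommRing R]

theorem MvPolynomial.totalDegree_pderiv_le (p : MvPolynomial σ R) (j : σ) :
    (pderiv j p).totalDegree ≤ p.totalDegree - 1 := by
  refine Finset.sup_le fun μ hμ => ?_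
  rw [mem_support_iff, coeff_pderiv] at hμ
  have := le_totalDegree (mem_support_iff.mpr (left_ne_zero_of_mul hμ))
  rw [Finsupp.sum_add_index' (by simp) (by simp)] at this
  simp only [Finsupp.sum_single_index, Order.add_one_le_iff] at this
  omega

theorem MvPolynomial.exists_eval_ne_zero_of_totalDegree_lt_card [Finite σ] [IsDomain R]
    {f : MvPolynomial σ R} (hf : f ≠ 0) (h : (f.totalDegree : Cardinal) < Cardinal.mk R) :
    ∃ x, eval x f ≠ 0 := by
  obtain ⟨ι⟩ : Nonempty (Fin (f.totalDegree + 1) ↪ R) := by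
    rwa [← Cardinal.natCast_add_one_le_iff, ← Nat.cast_add_one, ← Cardinal.lift_mk_fin,
      ← Cardinal.lift_uzero (Cardinal.mk R), Cardinal.lift_mk_le'] at h
  by_contra! hzero
  exact hf (eq_zero_of_eval_zero_at_prod_finset f (fun _ => Finset.univ.map ι)
    (fun i => by simpa using Nat.lt_succ_of_le (degreeOf_le_totalDegree f i))
    (fun x _ => hzero x))

theorem Matrix.totalDegree_det_le {ι : Type*} [Fintype ι] [DecidableEq ι]
    (M : Matrix ι ι (MvPolynomial σ R)) {e : ℕ} (h : ∀ i j, (M i j).totalDegree ≤ e) :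
    M.det.totalDegree ≤ Fintype.card ι * e := by
  rw [Matrix.det_apply]
  refine (totalDegree_finsetSum _ _).trans (Finset.sup_le fun g _ => ?_)
  refine (totalDegree_smul_le _ _).trans ((totalDegree_finsetProd _ _).trans ?_)
  simpa [mul_comm] using Finset.sum_le_sum fun i (_ : i ∈ Finset.univ) => h (g i) i

theorem Matrix.isHomogeneous_det {ι : Type*} [Fintype ι] [DecidableEq ι]
    (M : Matrix ι ι (MvPolynomial σ R)) (a : ι → ℕ) (h : ∀ i j, (M i j).IsHomogeneous (a i)) :
    M.det.IsHomogeneous (∑ i, a i) := by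
  rw [Matrix.det_apply]
  refine IsHomogeneous.sum _ _ _ fun g _ => ?_
  have := IsHomogeneous.prod Finset.univ (fun i => M (g i) i) (a ∘ g) fun i _ => h (g i) i
  rw [Function.comp_def, Equiv.sum_comp g a] at this
  rcases Int.units_eq_one_or (Equiv.Perm.sign g) with hg | hg <;> simp [hg, this, this.neg]

theorem MvPolynomial.pderiv_aeval [Fintype σ] {τ : Type*} (v : σ → MvPolynomial τ R)
    (p : MvPolynomial σ R) (j : τ) :
    pderiv j (aeval v p) = ∑ l, aeval v (pderiv l p) * pderiv j (v l) := by
  classical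
  induction p using MvPolynomial.induction_on with
  | C a => simp
  | add p q hp hq => simp only [map_add, hp, hq, add_mul, Finset.sum_add_distrib]
  | mul_X p i hp =>
    simp only [map_mul, aeval_X, pderiv_mul, hp, pderiv_X, map_add, add_mul,
      Finset.sum_add_distrib, Finset.sum_mul, Pi.single_apply, mul_ite, mul_one, mul_zero,
      ite_mul, zero_mul, map_zero, apply_ite (aeval v), Finset.sum_ite_eq, Finset.mem_univ,
      if_true]
    exact congrArg (· + _) (Finset.sum_congr rfl fun _ _ => mul_right_comm _ _ _)

theorem MvPolynomial.eval_aeval {τ : Type*} (x : τ → R) (v : σ → MvPolynomial τ R)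
    (p : MvPolynomial σ R) : eval x (aeval v p) = eval (fun k => eval x (v k)) p := by
  rw [aeval_eq_bind₁]
  exact eval₂Hom_bind₁ _ _ _ _

open Matrix in
theorem eval_jac_applyST {m n : ℕ} (S : Matrix (Fin m) (Fin m) R) (T : Matrix (Fin n) (Fin n) R)
    (H : Fin m → MvPolynomial (Fin n) R) (a : Fin n → R) :
    (Matrix.of fun i j => eval a (jac (applyST S T H) i j)) =
      S * (jac H).map (eval (T *ᵥ a)) * T := by
  have hT : ∀ k j, pderiv j (∑ l, C (T k l) * X l : MvPolynomial (Fin n) R) = C (T k j) := by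
    simp [pderiv_X, Pi.single_apply]
  have hTa : ∀ q, eval a (aeval (fun k => ∑ l, C (T k l) * X l) q) = eval (T *ᵥ a) q := by
    intro q
    rw [eval_aeval]
    congr
    ext k
    simp [mulVec, dotProduct]
  ext i j
  simp only [jac, applyST, of_apply, map_sum, pderiv_C_mul, pderiv_aeval, hT]
  simp only [map_sum, map_mul, eval_C, hTa, mul_apply, map_apply, of_apply, Finset.sum_mul,
    Finset.mul_sum]
  rw [Finset.sum_comm]
  simp only [mul_assoc]

theorem MvPolynomial.eval_zero_of_mulVec_X_eq_zero [Fintype σ] {ι : Type*}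
    {M : Matrix ι σ (MvPolynomial σ R)} (h : M.mulVec X = 0) (i : ι) (j : σ) :
    eval 0 (M i j) = 0 := by
  classical
  -- differentiate `∑ₗ M i l * X l = 0` with respect to `X j` and evaluate at `0`
  simpa [Matrix.mulVec, dotProduct, pderiv_mul, pderiv_X, Pi.single_apply, apply_ite] using
    congrArg (fun q => eval 0 (pderiv j q)) (congrFun h i)

theorem MvPolynomial.exists_ne_zero_eval_det_submatrix_ne_zero [Fintype σ] [Nonempty σ]
    [Nontrivial R] {ι : Type*} {M : Matrix ι σ (MvPolynomial σ R)} (hM : M.mulVec X = 0)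
    {k : ℕ} (s : Fin k → ι) (t : Fin k → σ) {x : σ → R}
    (hx : eval x (M.submatrix s t).det ≠ 0) :
    ∃ p ≠ 0, eval p (M.submatrix s t).det ≠ 0 := by
  rcases k.eq_zero_or_pos with rfl | hk
  · exact ⟨1, one_ne_zero, by simp⟩
  refine ⟨x, ?_, hx⟩
  rintro rfl
  have : Nonempty (Fin k) := ⟨⟨0, hk⟩⟩
  refine hx ((RingHom.map_det _ _).trans ?_)
  convert (Matrix.det_zero : (0 : Matrix (Fin k) (Fin k) R).det = 0)
  ext a b
  exact eval_zero_of_mulVec_X_eq_zero hM (s a) (t b)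

end Polynomial

theorem exists_eval_det_submatrix_jac_ne_zero {K : Type*} [Field K] {m n r d : ℕ}
    (H : Fin m → MvPolynomial (Fin n) K) (hdeg : ∀ i, (H i).totalDegree ≤ d)
    (hK : (((d - 1) * r : ℕ) : Cardinal) < Cardinal.mk K ∨
      ((((d - 1) * r : ℕ) : Cardinal) ≤ Cardinal.mk K ∧
        ∀ i, ∃ e : ℕ, (H i).IsHomogeneous e))
    (s : Fin r → Fin m) (t : Fin r → Fin n) (hf : ((jac H).submatrix s t).det ≠ 0) :
    ∃ x, eval x ((jac H).submatrix s t).det ≠ 0 := by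
  rcases hK with hK | ⟨hK, hhom⟩
  · refine exists_eval_ne_zero_of_totalDegree_lt_card hf (lt_of_le_of_lt ?_ hK)
    have := Matrix.totalDegree_det_le ((jac H).submatrix s t) fun k l =>
      (totalDegree_pderiv_le (H (s k)) (t l)).trans (Nat.sub_le_sub_right (hdeg (s k)) 1)
    rw [Fintype.card_fin, mul_comm] at this
    exact_mod_cast this
  · have hhom' : ∀ i, ∃ e ≤ d, (H i).IsHomogeneous e := fun i => by
      obtain ⟨e, he⟩ := hhom i
      by_cases h0 : H i = 0
      · exact ⟨0, Nat.zero_le _, h0 ▸ isHomogeneous_zero _ _ _⟩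
      · exact ⟨e, he.totalDegree h0 ▸ hdeg i, he⟩
    choose e he_le he using hhom'
    have hdet := Matrix.isHomogeneous_det ((jac H).submatrix s t) (fun k => e (s k) - 1)
      fun k l => (he (s k)).pderiv (i := t l)
    have hsum : ∑ k, (e (s k) - 1) ≤ (d - 1) * r := by
      simpa [mul_comm] using Finset.sum_le_sum fun k (_ : k ∈ Finset.univ) =>
        Nat.sub_le_sub_right (he_le (s k)) 1
    by_contra! h
    exact hf (hdet.eq_zero_of_forall_eval_eq_zero_of_le_card h
      ((Nat.cast_le.mpr hsum).trans hK))

open Matrix in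
/-- If `H` has degree `d`, rank `r := rk JH`, `|K| > (d-1)r` (or `|K| ≥ (d-1)r` when every
nonzero component of `H` is homogeneous) and `JH · x = 0`, then after composing with
suitable `S ∈ GL_m(K)` and `T ∈ GL_n(K)`, the Jacobian matrix of `S·H(Tx)` evaluated at
`e_{r+1}` is the block matrix `[[I_r, 0], [0, 0]]`. -/
theorem jacobian_normal_form_at_point_of_mulVec_eq_zero {K : Type*} [Field K]
    {m n : ℕ} (d : ℕ) (H : Fin m → MvPolynomial (Fin n) K)
    (hd : (Finset.univ.sup fun i => (H i).totalDegree) = d)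
    (r : ℕ) (hr : r = jacRank H)
    (hK : (((d - 1) * r : ℕ) : Cardinal) < Cardinal.mk K ∨
      ((((d - 1) * r : ℕ) : Cardinal) ≤ Cardinal.mk K ∧
        ∀ i, ∃ e : ℕ, (H i).IsHomogeneous e))
    (hx : (jac H).mulVec (fun j => X j) = 0) :
    ∃ (S : Matrix.GeneralLinearGroup (Fin m) K) (T : Matrix.GeneralLinearGroup (Fin n) K),
      (Matrix.of fun (i : Fin m) (j : Fin n) =>
          eval (fun k : Fin n => if (k : ℕ) = r then 1 else 0)
            (jac (applyST (S : Matrix (Fin m) (Fin m) K) (T : Matrix (Fin n) (Fin n) K) H) i j)) =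
      Matrix.of fun (i : Fin m) (j : Fin n) =>
        if (i : ℕ) = (j : ℕ) ∧ (i : ℕ) < r then 1 else 0 := by
  obtain _ | n := n
  · exact ⟨1, 1, Matrix.ext fun _ j => j.elim0⟩
  obtain ⟨s, t, hst⟩ := exists_det_submatrix_ne_zero_of_le_rank (k := r) _ hr.le
  rw [det_submatrix_map] at hst
  have hf : ((jac H).submatrix s t).det ≠ 0 := fun h => hst (by rw [h, map_zero])
  have hdeg i : (H i).totalDegree ≤ d :=
    hd ▸ Finset.le_sup (f := fun i => (H i).totalDegree) (Finset.mem_univ i)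
  obtain ⟨x, hfx⟩ := exists_eval_det_submatrix_jac_ne_zero H hdeg hK s t hf
  obtain ⟨p, hp0, hfp⟩ := exists_ne_zero_eval_det_submatrix_ne_zero hx s t hfx
  set A := (jac H).map (eval p)
  have hA : A.rank = r := le_antisymm
    (hr ▸ rank_map_le_rank_map_of_injective _ _ (IsFractionRing.injective _ _))
    (A.le_rank_of_det_submatrix_ne_zero s t (by rwa [det_submatrix_map]))
  have hAp : A *ᵥ p = 0 := funext fun i => by
    simpa [A, RingHom.map_mulVec, Function.comp_def] using congrArg (eval p) (congrFun hx i)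
  obtain ⟨S, T, hTp, hSAT⟩ := A.exists_mul_mul_eq_of_mulVec_eq_zero hp0 hAp
  refine ⟨S, T, ?_⟩
  rw [eval_jac_applyST, ← hA, hTp]
  exact hSAT
end

section
/- Let K be a field and let N be a 2×2 nilpotent matrix over the polynomial ring K[x_1,…,x_n]. Then there exist a, b, c ∈ K[x_1,…,x_n] such that N = c·[[ab, −b²],[a², −ab]], and a and b can be chosen relatively prime. -/
/-!
A nilpotent `2 × 2` matrix has trace and determinant zero, so it is `!![p, q; r, -p]` with
`p ^ 2 = -(q * r)`. Over a GCD domain, dividing by `g = gcd q r` makes `q` and `r` coprime; a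
coprime product that is a square (up to sign) has both factors associated to squares, say
`r = a ^ 2 * v` and `-q = b ^ 2 * v⁻¹`, and then `p = a * b`. Absorbing the unit `v` into `a`
and `g * v⁻¹` into `c` gives the required form.
-/

open MvPolynomial

section SqEqNegMul

variable {R : Type*} [CommRing R] [IsDomain R] [IsGCDMonoid R]

theorem exists_isRelPrime_of_sq_eq_neg_mul_of_isRelPrime {p q r : R} (hqr : IsRelPrime q r)
    (hr : r ≠ 0) (h : p ^ 2 = -(q * r)) :
    ∃ a b c : R, IsRelPrime a b ∧ p = c * (a * b) ∧ q = -(c * b ^ 2) ∧ r = c * a ^ 2 := by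
  obtain ⟨_⟩ := ‹IsGCDMonoid R›
  obtain ⟨a₀, v, hv⟩ : ∃ a₀ : R, Associated (a₀ ^ 2) r :=
    exists_associated_pow_of_mul_eq_pow (gcd_isUnit_iff_isRelPrime.mpr hqr.symm.neg_right)
      (by rw [h]; ring)
  have ha₀ : a₀ ≠ 0 := by rintro rfl; simp [← hv] at hr
  obtain ⟨b, rfl⟩ : a₀ ∣ p := (IsIntegrallyClosed.pow_dvd_pow_iff two_ne_zero).mp
    ⟨-(q * v), by rw [h, ← hv]; ring⟩
  have hb : b ^ 2 = -(q * v) :=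
    mul_left_cancel₀ (pow_ne_zero 2 ha₀) (by rw [← mul_pow, h, ← hv]; ring)
  have hvv : (↑v⁻¹ : R) * v = 1 := v.inv_mul
  refine ⟨a₀ * v, b, ↑v⁻¹, ?_, by linear_combination (-(a₀ * b)) * hvv,
    by linear_combination (↑v⁻¹ : R) * hb - q * hvv, by linear_combination -hv - a₀ ^ 2 * v * hvv⟩
  refine (isRelPrime_mul_unit_right_left v.isUnit).mpr fun d hda hdb ↦ hqr ?_ ?_
  · have hdqv : d ∣ q * v := dvd_neg.mp (hb ▸ dvd_pow hdb two_ne_zero)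
    exact v.isUnit.dvd_mul_right.mp hdqv
  · exact hv ▸ (dvd_pow hda two_ne_zero).mul_right _

theorem exists_isRelPrime_of_sq_eq_neg_mul {p q r : R} (h : p ^ 2 = -(q * r)) :
    ∃ a b c : R, IsRelPrime a b ∧ p = c * (a * b) ∧ q = -(c * b ^ 2) ∧ r = c * a ^ 2 := by
  obtain ⟨_⟩ := ‹IsGCDMonoid R›
  rcases eq_or_ne r 0 with rfl | hr
  · exact ⟨0, 1, -q, isRelPrime_one_right, by simpa using h, by ring, by ring⟩
  obtain ⟨q₁, r₁, hq, hr₁, hqr₁⟩ := extract_gcd q r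
  set g := gcd q r
  have hg : g ≠ 0 := fun hg ↦ hr ((gcd_eq_zero_iff q r).mp hg).2
  obtain ⟨p₁, hp⟩ : g ∣ p := (IsIntegrallyClosed.pow_dvd_pow_iff two_ne_zero).mp
    ⟨-(q₁ * r₁), by rw [h, hq, hr₁]; ring⟩
  have h₁ : p₁ ^ 2 = -(q₁ * r₁) :=
    mul_left_cancel₀ (pow_ne_zero 2 hg) (by rw [← mul_pow, ← hp, h, hq, hr₁]; ring)
  obtain ⟨a, b, c, hab, rfl, rfl, rfl⟩ := exists_isRelPrime_of_sq_eq_neg_mul_of_isRelPrime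
    (gcd_isUnit_iff_isRelPrime.mp hqr₁) (right_ne_zero_of_mul (hr₁ ▸ hr)) h₁
  exact ⟨a, b, g * c, hab, by rw [hp]; ring, by rw [hq]; ring, by rw [hr₁]; ring⟩

end SqEqNegMul

/-- A nilpotent `2 × 2` matrix over `K[x]` has the form `c·[[ab, -b²], [a², -ab]]`
with `a` and `b` relatively prime. -/
theorem nilpotent_two_by_two_form {K : Type*} [Field K] {n : ℕ}
    (N : Matrix (Fin 2) (Fin 2) (MvPolynomial (Fin n) K))
    (hN : IsNilpotent N) :
    ∃ a b c : MvPolynomial (Fin n) K, IsRelPrime a b ∧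
      N = c • !![a * b, -b ^ 2; a ^ 2, -(a * b)] := by
  have htr : N.trace = 0 := (Matrix.isNilpotent_trace_of_isNilpotent hN).eq_zero
  have hdet : N.det = 0 := by
    obtain ⟨k, hk⟩ := hN
    exact IsNilpotent.eq_zero ⟨k, by rw [← Matrix.det_pow, hk, Matrix.det_zero]⟩
  rw [Matrix.trace_fin_two] at htr
  rw [Matrix.det_fin_two] at hdet
  have h11 : N 1 1 = -N 0 0 := by linear_combination htr
  obtain ⟨a, b, c, hab, h00, h01, h10⟩ :=
    exists_isRelPrime_of_sq_eq_neg_mul (p := N 0 0) (q := N 0 1) (r := N 1 0)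
      (by linear_combination N 0 0 * htr - hdet)
  refine ⟨a, b, c, hab, ?_⟩
  ext i j
  fin_cases i <;> fin_cases j <;> simp [h00, h01, h10, h11]
end

section
/- Let K be a field, let a, b, c ∈ K[x_1,…,x_n] with c ≠ 0 and a, b relatively prime, and let N := c·[[ab, −b²],[a², −ab]]. Then N is similar over K to a triangular matrix (i.e., there exists T ∈ GL_2(K) with T⁻¹NT lower triangular over K[x]) if and only if a and b are linearly dependent over K. -/
open MvPolynomial

/-- Let `a, b, c ∈ K[x]` with `c ≠ 0` and `a, b` relatively prime, and let
`N = c·[[ab, -b²], [a², -ab]]`. Then `N` is similar over `K` to a triangular matrix if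
and only if `a` and `b` are linearly dependent over `K`. -/
theorem nilpotent_form_triangularizable_iff {K : Type*} [Field K] {n : ℕ}
    (a b c : MvPolynomial (Fin n) K) (hc : c ≠ 0) (hab : IsRelPrime a b)
    (N : Matrix (Fin 2) (Fin 2) (MvPolynomial (Fin n) K))
    (hN : N = c • !![a * b, -b ^ 2; a ^ 2, -(a * b)]) :
    (∃ T : Matrix.GeneralLinearGroup (Fin 2) K,
        ∀ i j : Fin 2, i < j →
          (((T⁻¹ : Matrix.GeneralLinearGroup (Fin 2) K) : Matrix (Fin 2) (Fin 2) K).map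
              (C : K → MvPolynomial (Fin n) K) * N *
            ((T : Matrix (Fin 2) (Fin 2) K)).map (C : K → MvPolynomial (Fin n) K)) i j = 0)
    ↔ ∃ l m : K, (l ≠ 0 ∨ m ≠ 0) ∧ l • a + m • b = 0 := by
  constructor
  · rintro ⟨T, hT⟩
    have h01 := hT 0 1 (by decide)
    rw [hN] at h01
    set M := (T : Matrix (Fin 2) (Fin 2) K) with hM
    set Mi := ((T⁻¹ : Matrix.GeneralLinearGroup (Fin 2) K) : Matrix (Fin 2) (Fin 2) K) with hMi
    simp [Matrix.mul_apply, Fin.sum_univ_two, Matrix.map_apply, Matrix.smul_apply,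
      smul_eq_mul] at h01
    have key : c * ((C (Mi 0 0) * b + C (Mi 0 1) * a) *
        (C (M 0 1) * a - C (M 1 1) * b)) = 0 := by linear_combination h01
    rcases mul_eq_zero.mp key with h | h
    · exact absurd h hc
    rcases mul_eq_zero.mp h with h | h
    · refine ⟨Mi 0 1, Mi 0 0, ?_, ?_⟩
      · by_contra hcon
        push_neg at hcon
        obtain ⟨h1, h2⟩ := hcon
        have hu : IsUnit Mi := (T⁻¹).isUnit
        have hd := ((Matrix.isUnit_iff_isUnit_det Mi).mp hu).ne_zero
        rw [Matrix.det_fin_two, h1, h2] at hd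
        simp at hd
      · rw [smul_eq_C_mul, smul_eq_C_mul]
        linear_combination h
    · refine ⟨M 0 1, -(M 1 1), ?_, ?_⟩
      · by_contra hcon
        push_neg at hcon
        obtain ⟨h1, h2⟩ := hcon
        have hu : IsUnit M := T.isUnit
        have hd := ((Matrix.isUnit_iff_isUnit_det M).mp hu).ne_zero
        rw [Matrix.det_fin_two, h1, neg_eq_zero.mp h2] at hd
        simp at hd
      · rw [smul_eq_C_mul, smul_eq_C_mul, map_neg]
        linear_combination h
  · rintro ⟨l, m, hlm, heq⟩
    rw [smul_eq_C_mul, smul_eq_C_mul] at heq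
    have hex : ∀ (A : Matrix (Fin 2) (Fin 2) K) (hA : A.det ≠ 0),
        A 0 1 = l → A 1 1 = -m →
        ∀ i j : Fin 2, i < j →
          (((Matrix.GeneralLinearGroup.mkOfDetNeZero A hA)⁻¹ :
              Matrix.GeneralLinearGroup (Fin 2) K).val.map
              (C : K → MvPolynomial (Fin n) K) * N *
            ((Matrix.GeneralLinearGroup.mkOfDetNeZero A hA :
              Matrix.GeneralLinearGroup (Fin 2) K) : Matrix (Fin 2) (Fin 2) K).map
              (C : K → MvPolynomial (Fin n) K)) i j = 0 := by
      intro A hA hq hs i j hij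
      fin_cases i <;> fin_cases j <;> try exact absurd hij (by decide)
      rw [hN]
      set Mi := ((Matrix.GeneralLinearGroup.mkOfDetNeZero A hA)⁻¹ :
          Matrix.GeneralLinearGroup (Fin 2) K).val with hMi
      have hT : ((Matrix.GeneralLinearGroup.mkOfDetNeZero A hA :
          Matrix.GeneralLinearGroup (Fin 2) K) : Matrix (Fin 2) (Fin 2) K) = A := rfl
      rw [hT]
      simp [Matrix.mul_apply, Fin.sum_univ_two, Matrix.map_apply, Matrix.smul_apply,
        smul_eq_mul, hq, hs, map_neg]
      linear_combination (c * (C (Mi 0 0) * b + C (Mi 0 1) * a)) * heq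
    rcases em (l = 0) with hl | hl
    · have hm : m ≠ 0 := hlm.resolve_left (by simp [hl])
      refine ⟨_, hex !![1, l; 0, -m] (by simp [Matrix.det_fin_two, hm]) rfl rfl⟩
    · refine ⟨_, hex !![0, l; 1, -m] (by simp [Matrix.det_fin_two, hl]) rfl rfl⟩
end

section
/- Let K be a field of characteristic p ≥ 0 and let H ∈ K[x_1,…,x_n]^n be a polynomial map each of whose components is a term, i.e., H_i = c_i·x_1^{a_{i1}}⋯x_n^{a_{in}} with c_i ∈ K \ {0}. Let M ∈ Mat_n(ℤ) be the matrix with entries M_{ij} = a_{ij} = deg_{x_j} H_i. Then the components H_1,…,H_n are algebraically independent over K and det JH = 0 if and only if det M ≠ 0 in ℤ but the image of det M in K is zero. -/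
open MvPolynomial

/-!
For a term `Hᵢ = cᵢ xᵃⁱ` one has `xⱼ ∂Hᵢ/∂xⱼ = aᵢⱼ Hᵢ`, so `JH · diag(x) = diag(H) · M` and
`det JH · x₁⋯xₙ = (det M : K) · H₁⋯Hₙ`; hence `det JH = 0` exactly when `det M` vanishes in `K`.
On the other hand `H^α` is a nonzero term with exponent `α M`, so distinct monomials in the `Hᵢ`
stay distinct exactly when `α ↦ α M` is injective on `ℕⁿ`: the `Hᵢ` are algebraically independent
iff the rows of `M` are `ℕ`-linearly independent, which by Tan's theorem on matrices over
semirings (`Matrix.linearIndependent_row_iff`) happens iff `det M ≠ 0` in `ℤ`.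
-/

open Matrix

theorem MvPolynomial.C_mul_prod_X_pow_eq_monomial {σ R : Type*} [CommSemiring R] [Fintype σ]
    (r : R) (e : σ → ℕ) :
    C r * ∏ j, X j ^ e j = monomial (Finsupp.equivFunOnFinite.symm e) r := by
  classical
  rw [prod_X_pow, C_mul_monomial, mul_one]
  congr
  ext j
  simp [Finsupp.indicator_apply]

section Jacobian

variable {K : Type*} [CommRing K] {n : ℕ}

theorem jac_monomial_mul_diagonal_X (d : Fin n → Fin n →₀ ℕ) (c : Fin n → K) :
    jac (fun i => monomial (d i) (c i)) * diagonal X =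
      of fun i j => monomial (d i) (c i) * C (d i j : K) := by
  ext1 i j
  rw [mul_diagonal, jac, of_apply, of_apply, mul_comm, X_mul_pderiv_monomial, nsmul_eq_mul,
    map_natCast, mul_comm]

theorem det_jac_monomial_mul_prod_X (d : Fin n → Fin n →₀ ℕ) (c : Fin n → K) :
    (jac fun i => monomial (d i) (c i)).det * ∏ j, X j =
      (∏ i, monomial (d i) (c i)) * C (of fun i j => (d i j : K)).det := by
  rw [← det_diagonal, ← det_mul, jac_monomial_mul_diagonal_X, RingHom.map_det]
  exact det_mul_column _ (of fun i j => C (d i j : K))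

theorem det_jac_monomial_eq_zero_iff [IsDomain K] (d : Fin n → Fin n →₀ ℕ) {c : Fin n → K}
    (hc : ∀ i, c i ≠ 0) :
    (jac fun i => monomial (d i) (c i)).det = 0 ↔ (of fun i j => (d i j : K)).det = 0 := by
  have hX : ∏ j, (X j : MvPolynomial (Fin n) K) ≠ 0 :=
    Finset.prod_ne_zero_iff.mpr fun j _ => X_ne_zero j
  have hH : ∏ i, monomial (d i) (c i) ≠ 0 :=
    Finset.prod_ne_zero_iff.mpr fun i _ => monomial_eq_zero.not.mpr (hc i)
  rw [← mul_left_inj' hX, det_jac_monomial_mul_prod_X, zero_mul, mul_eq_zero_iff_left hH,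
    C_eq_zero]

end Jacobian

section AlgebraicIndependence

variable {σ ι R : Type*} [CommRing R] (d : ι → σ →₀ ℕ) (c : ι → R)

theorem aeval_monomial_monomial (α : ι →₀ ℕ) (b : R) :
    aeval (fun i => monomial (d i) (c i)) (monomial α b) =
      monomial (Finsupp.linearCombination ℕ d α) (b * α.prod fun i k => c i ^ k) := by
  simp_rw [aeval_monomial, monomial_pow, Finsupp.linearCombination_apply, Finsupp.prod,
    Finsupp.sum, ← monomial_sum_prod, algebraMap_eq, C_mul_monomial]

theorem coeff_linearCombination_aeval_monomial (hd : LinearIndependent ℕ d)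
    (α : ι →₀ ℕ) (p : MvPolynomial ι R) :
    coeff (Finsupp.linearCombination ℕ d α) (aeval (fun i => monomial (d i) (c i)) p) =
      coeff α p * α.prod fun i k => c i ^ k := by
  induction p using MvPolynomial.induction_on' with
  | monomial β b =>
    classical
    rw [aeval_monomial_monomial, coeff_monomial, coeff_monomial]
    by_cases h : β = α
    · rw [h, if_pos rfl, if_pos rfl]
    · rw [if_neg (hd.ne h), if_neg h, zero_mul]
  | add p q hp hq => rw [map_add, coeff_add, coeff_add, hp, hq, add_mul]

variable [IsDomain R]

theorem algebraicIndependent_monomial_iff (hc : ∀ i, c i ≠ 0) :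
    AlgebraicIndependent R (fun i => monomial (d i) (c i)) ↔ LinearIndependent ℕ d := by
  have hprod (α : ι →₀ ℕ) : (α.prod fun i k => c i ^ k) ≠ 0 :=
    Finsupp.prod_ne_zero_iff.mpr fun i _ => pow_ne_zero _ (hc i)
  constructor
  · intro hind α β h
    have hmon := @hind (monomial α (β.prod fun i k => c i ^ k))
      (monomial β (α.prod fun i k => c i ^ k))
      (by rw [aeval_monomial_monomial, aeval_monomial_monomial, h, mul_comm])
    rw [monomial_eq_monomial_iff] at hmon
    tauto
  · intro hd
    refine algebraicIndependent_iff.mpr fun p hp => ?_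
    ext α
    have hcoeff := coeff_linearCombination_aeval_monomial d c hd α p
    rw [hp, coeff_zero, eq_comm, mul_eq_zero_iff_right (hprod α)] at hcoeff
    rw [hcoeff, coeff_zero]

end AlgebraicIndependence

namespace Matrix

variable {ι : Type*} [Fintype ι] [DecidableEq ι]

theorem nonsingular_iff_detp_one_ne_detp_neg_one (A : Matrix ι ι ℕ) :
    A.Nonsingular ↔ A.detp 1 ≠ A.detp (-1) := by
  refine ⟨fun hA h => zero_ne_one (hA 0 1 (.of_eq h)), fun hne a b hab => ?_⟩
  unfold IsDetpBalanced at hab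
  zify at hab
  have hprod : ((a : ℤ) - b) * (((A.detp 1 : ℕ) : ℤ) - (A.detp (-1) : ℕ)) = 0 := by
    linear_combination hab
  rcases mul_eq_zero.mp hprod with hab_sub | hdetp_sub
  · exact_mod_cast sub_eq_zero.mp hab_sub
  · exact absurd (by exact_mod_cast sub_eq_zero.mp hdetp_sub) hne

theorem linearIndependent_row_iff_det_natCast_ne_zero (A : Matrix ι ι ℕ) :
    LinearIndependent ℕ A.row ↔ (A.map ((↑) : ℕ → ℤ)).det ≠ 0 := by
  rw [linearIndependent_row_iff, nonsingular_iff_detp_one_ne_detp_neg_one, det_eq_detp_sub_detp,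
    sub_ne_zero]
  change _ ↔ (A.map (Nat.castRingHom ℤ)).detp 1 ≠ (A.map (Nat.castRingHom ℤ)).detp (-1)
  rw [detp_map, detp_map, Ne, Ne, (Nat.castRingHom ℤ).injective_nat.eq_iff]

end Matrix

/-- For a polynomial map `H` whose components are terms `Hᵢ = cᵢ·x₁^{a_{i1}}⋯xₙ^{a_{in}}`
(with `cᵢ ≠ 0`), letting `M ∈ Matₙ(ℤ)` be the matrix of exponents `M_{ij} = a_{ij}`,
the components of `H` are algebraically independent over `K` with `det JH = 0` if and
only if `det M ≠ 0` in `ℤ` while the image of `det M` in `K` is zero. -/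
theorem monomial_map_algIndep_and_det_zero_iff {K : Type*} [Field K] {n : ℕ}
    (c : Fin n → K) (hc : ∀ i, c i ≠ 0) (a : Fin n → Fin n → ℕ)
    (H : Fin n → MvPolynomial (Fin n) K)
    (hH : ∀ i, H i = C (c i) * ∏ j, X j ^ a i j)
    (M : Matrix (Fin n) (Fin n) ℤ) (hM : ∀ i j, M i j = (a i j : ℤ)) :
    (AlgebraicIndependent K H ∧ (jac H).det = 0) ↔
      (M.det ≠ 0 ∧ ((M.det : ℤ) : K) = 0) := by
  set d : Fin n → Fin n →₀ ℕ := fun i => Finsupp.equivFunOnFinite.symm (a i)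
  obtain rfl : H = fun i => monomial (d i) (c i) :=
    funext fun i => by rw [hH, C_mul_prod_X_pow_eq_monomial]
  obtain rfl : M = (of a).map (↑) := ext hM
  have hrows : LinearIndependent ℕ d ↔ LinearIndependent ℕ (of a).row :=
    ((Finsupp.linearEquivFunOnFinite ℕ ℕ (Fin n)).toLinearMap.linearIndependent_iff_of_injOn
      (Finsupp.linearEquivFunOnFinite ℕ ℕ (Fin n)).injective.injOn).symm
  have hdet : (of fun i j => (d i j : K)).det = (((of a).map (↑)).det : ℤ) := by
    rw [Int.cast_det]
    congr 1
    ext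
    simp [d]
  rw [algebraicIndependent_monomial_iff d c hc, det_jac_monomial_eq_zero_iff d hc, hrows,
    linearIndependent_row_iff_det_natCast_ne_zero, hdet]
end

section
/- Let p be a prime, let d ≥ p, let K be a field of characteristic p, and let H := (x_1^d, x_1^{d−p}x_2^p) ∈ K[x_1,x_2]². Then H is homogeneous of degree d, rk JH ≤ 1, and the components x_1^d and x_1^{d−p}x_2^p are algebraically independent over K (so trdeg_K K(H) = 2 > rk JH; hence the hypothesis char K ∉ {1,…,d} cannot be dropped from the statement that homogeneous maps of degree d with rk JH ≤ 1 satisfy rk JH = trdeg_K K(H)). -/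
open MvPolynomial

/-- Transcendence degree of an algebra extension. -/
noncomputable def trdeg (R A : Type*) [CommRing R] [CommRing A] [Algebra R A] : Cardinal :=
  ⨆ ι : { s : Set A // AlgebraicIndependent R ((↑) : s → A) }, Cardinal.mk ι.1

/-- `trdeg_K K(H)`: the transcendence degree over `K` of the subfield of the rational
function field generated by the components of `H`. -/
noncomputable def trdegMap {K : Type*} [Field K] {m n : ℕ}
    (H : Fin m → MvPolynomial (Fin n) K) : Cardinal :=
  trdeg K (IntermediateField.adjoin K
    (Set.range fun i => algebraMap (MvPolynomial (Fin n) K)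
      (FractionRing (MvPolynomial (Fin n) K)) (H i)))

section Helpers

variable {K : Type*} [Field K]

private lemma coeff_sum_monomial_eq {σ ι : Type*} [DecidableEq σ] (s : Finset ι)
    (f : ι → (σ →₀ ℕ)) (c : ι → K)
    {m : ι} (hm : m ∈ s) (hf : ∀ m' ∈ s, f m' = f m → m' = m) :
    coeff (f m) (∑ m' ∈ s, monomial (f m') (c m')) = c m := by
  classical
  rw [coeff_sum, Finset.sum_eq_single_of_mem m hm]
  · rw [coeff_monomial, if_pos rfl]
  · intro b hb hbm
    rw [coeff_monomial, if_neg fun h => hbm (hf b hb h)]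

private lemma indep_pows {p d : ℕ} (hp : 0 < p) (hd : p ≤ d) :
    AlgebraicIndependent K ![(X 0 : MvPolynomial (Fin 2) K) ^ d, X 0 ^ (d - p) * X 1 ^ p] := by
  have hd0 : 0 < d := lt_of_lt_of_le hp hd
  rw [algebraicIndependent_iff]
  intro P hP
  set v : Fin 2 → MvPolynomial (Fin 2) K :=
    ![(X 0 : MvPolynomial (Fin 2) K) ^ d, X 0 ^ (d - p) * X 1 ^ p] with hv
  set φ : (Fin 2 →₀ ℕ) → (Fin 2 →₀ ℕ) := fun t =>
    Finsupp.single 0 (d * t 0 + (d - p) * t 1) + Finsupp.single 1 (p * t 1) with hφ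
  have hφ0 : ∀ t, φ t 0 = d * t 0 + (d - p) * t 1 := by
    intro t; simp [hφ, Finsupp.single_apply]
  have hφ1 : ∀ t, φ t 1 = p * t 1 := by
    intro t; simp [hφ, Finsupp.single_apply]
  have hφinj : ∀ t t', φ t = φ t' → t = t' := by
    intro t t' h
    have h1 : p * t 1 = p * t' 1 := by rw [← hφ1 t, ← hφ1 t', h]
    have h0 : d * t 0 + (d - p) * t 1 = d * t' 0 + (d - p) * t' 1 := by
      rw [← hφ0 t, ← hφ0 t', h]
    have e1 : t 1 = t' 1 := Nat.eq_of_mul_eq_mul_left hp h1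
    have e0 : t 0 = t' 0 := by
      rw [e1] at h0
      exact Nat.eq_of_mul_eq_mul_left hd0 (Nat.add_right_cancel h0)
    ext i
    fin_cases i
    · exact e0
    · exact e1
  have key : ∀ (t : Fin 2 →₀ ℕ) (c : K), aeval v (monomial t c) = monomial (φ t) c := by
    intro t c
    rw [aeval_monomial, Finsupp.prod_fintype _ _ (fun i => pow_zero _), Fin.prod_univ_two]
    rw [hv]
    simp only [Matrix.cons_val_zero, Matrix.cons_val_one, Matrix.head_cons]
    rw [← pow_mul, mul_pow, ← pow_mul, ← pow_mul]
    rw [X_pow_eq_monomial, X_pow_eq_monomial, X_pow_eq_monomial]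
    rw [show (algebraMap K (MvPolynomial (Fin 2) K)) c = C c from rfl]
    have hexp : φ t = (Finsupp.single (0 : Fin 2) (d * t 0)) +
        ((Finsupp.single (0 : Fin 2) ((d - p) * t 1)) + (Finsupp.single (1 : Fin 2) (p * t 1))) := by
      ext i
      fin_cases i <;> simp [hφ, Finsupp.single_apply]
    rw [hexp, monomial_mul, monomial_mul, C_mul_monomial]
    simp
  have hsum : aeval v P = ∑ t ∈ P.support, monomial (φ t) (coeff t P) := by
    conv_lhs => rw [as_sum P]
    rw [map_sum]
    exact Finset.sum_congr rfl fun t _ => key t (coeff t P)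
  by_contra hne
  obtain ⟨t, ht⟩ := (support_nonempty.mpr hne)
  have : coeff (φ t) (aeval v P) = coeff t P :=
    hsum ▸ coeff_sum_monomial_eq P.support φ (fun t => coeff t P) ht
      (fun t' _ h => hφinj t' t h)
  rw [hP] at this
  simp only [coeff_zero] at this
  exact (mem_support_iff.mp ht) this.symm

set_option maxHeartbeats 1000000 in
private lemma not_indep_three (a : Fin 3 → FractionRing (MvPolynomial (Fin 2) K)) :
    ¬ AlgebraicIndependent K a := by
  intro hA
  have hinj : Function.Injective (algebraMap (MvPolynomial (Fin 2) K) (FractionRing (MvPolynomial (Fin 2) K))) := IsFractionRing.injective (MvPolynomial (Fin 2) K) (FractionRing (MvPolynomial (Fin 2) K))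
  have hsur := fun i => IsLocalization.surj (nonZeroDivisors (MvPolynomial (Fin 2) K)) (a i)
  choose x hx using hsur
  set Q : (MvPolynomial (Fin 2) K) := ∏ j : Fin 3, ((x j).2 : (MvPolynomial (Fin 2) K)) with hQ
  have hQ0 : Q ≠ 0 := by
    rw [hQ]
    apply Finset.prod_ne_zero_iff.mpr
    intro j _
    exact nonZeroDivisors.ne_zero (x j).2.2
  set P : Fin 3 → (MvPolynomial (Fin 2) K) := fun i => (x i).1 * ∏ j ∈ Finset.univ.erase i, ((x j).2 : (MvPolynomial (Fin 2) K)) with hP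
  have h1 : ∀ i, a i * algebraMap (MvPolynomial (Fin 2) K) (FractionRing (MvPolynomial (Fin 2) K)) Q = algebraMap (MvPolynomial (Fin 2) K) (FractionRing (MvPolynomial (Fin 2) K)) (P i) := by
    intro i
    rw [hQ, ← Finset.mul_prod_erase Finset.univ _ (Finset.mem_univ i), map_mul, ← mul_assoc,
      hx i, ← map_mul]
  obtain ⟨D, hPD, hQD⟩ : ∃ D : ℕ, (∀ i, (P i).totalDegree ≤ D) ∧ Q.totalDegree ≤ D :=
    ⟨max (Finset.univ.sup fun i => (P i).totalDegree) Q.totalDegree,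
      fun i => le_max_of_le_left
        (Finset.le_sup (f := fun i => (P i).totalDegree) (Finset.mem_univ i)),
      le_max_right _ _⟩
  obtain ⟨N, hN, hN1⟩ : ∃ N : ℕ, N = 9 * (3 * D + 1) ^ 2 ∧ 0 < N :=
    ⟨9 * (3 * D + 1) ^ 2, rfl, by positivity⟩
  obtain ⟨M, hM⟩ : ∃ M : ℕ, M = 3 * N * D := ⟨3 * N * D, rfl⟩
  set v : Fin (N+1) × Fin (N+1) × Fin (N+1) → (MvPolynomial (Fin 2) K) := fun m =>
    P 0 ^ (m.1 : ℕ) * P 1 ^ (m.2.1 : ℕ) * P 2 ^ (m.2.2 : ℕ)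
      * Q ^ (3 * N - ((m.1 : ℕ) + (m.2.1 : ℕ) + (m.2.2 : ℕ))) with hvdef
  have hvdeg : ∀ m, (v m).totalDegree ≤ M := by
    rintro ⟨i, j, k⟩
    have hs : (i : ℕ) + (j : ℕ) + (k : ℕ) ≤ 3 * N := by
      have := i.is_le; have := j.is_le; have := k.is_le; omega
    set e : ℕ := 3 * N - ((i : ℕ) + (j : ℕ) + (k : ℕ)) with he
    have h0 : (P 0 ^ (i : ℕ)).totalDegree ≤ (i : ℕ) * D :=
      (totalDegree_pow _ _).trans (Nat.mul_le_mul_left _ (hPD 0))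
    have h1' : (P 1 ^ (j : ℕ)).totalDegree ≤ (j : ℕ) * D :=
      (totalDegree_pow _ _).trans (Nat.mul_le_mul_left _ (hPD 1))
    have h2 : (P 2 ^ (k : ℕ)).totalDegree ≤ (k : ℕ) * D :=
      (totalDegree_pow _ _).trans (Nat.mul_le_mul_left _ (hPD 2))
    have hq : (Q ^ e).totalDegree ≤ e * D :=
      (totalDegree_pow _ _).trans (Nat.mul_le_mul_left _ hQD)
    have hAB : (P 0 ^ (i : ℕ) * P 1 ^ (j : ℕ) * P 2 ^ (k : ℕ)).totalDegree
        ≤ (i : ℕ) * D + (j : ℕ) * D + (k : ℕ) * D :=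
      (totalDegree_mul _ _).trans (Nat.add_le_add
        ((totalDegree_mul _ _).trans (Nat.add_le_add h0 h1')) h2)
    have hfin : (v (i, j, k)).totalDegree
        ≤ ((i : ℕ) * D + (j : ℕ) * D + (k : ℕ) * D) + e * D :=
      (totalDegree_mul _ _).trans (Nat.add_le_add hAB hq)
    have heq : ((i : ℕ) * D + (j : ℕ) * D + (k : ℕ) * D) + e * D
        = ((i : ℕ) + (j : ℕ) + (k : ℕ) + e) * D := by ring
    have hsum : (i : ℕ) + (j : ℕ) + (k : ℕ) + e = 3 * N := by omega
    rw [heq, hsum] at hfin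
    rw [hM]
    exact hfin
  have hmem : ∀ m, v m ∈ restrictDegree (Fin 2) K M := fun m =>
    restrictTotalDegree_le_restrictDegree (Fin 2) K M
      ((mem_restrictTotalDegree (Fin 2) M (v m)).mpr (hvdeg m))
  have hLI : LinearIndependent K v := by
    rw [Fintype.linearIndependent_iff]
    intro g hg m
    have hg' := congrArg (IsScalarTower.toAlgHom K (MvPolynomial (Fin 2) K) (FractionRing (MvPolynomial (Fin 2) K))).toLinearMap hg
    rw [map_sum, map_zero] at hg'
    simp only [LinearMap.map_smul, AlgHom.toLinearMap_apply,
      IsScalarTower.coe_toAlgHom'] at hg'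
    have hval : ∀ m' : Fin (N+1) × Fin (N+1) × Fin (N+1), algebraMap (MvPolynomial (Fin 2) K) (FractionRing (MvPolynomial (Fin 2) K)) (v m') =
        (a 0 ^ (m'.1 : ℕ) * a 1 ^ (m'.2.1 : ℕ) * a 2 ^ (m'.2.2 : ℕ))
          * algebraMap (MvPolynomial (Fin 2) K) (FractionRing (MvPolynomial (Fin 2) K)) Q ^ (3 * N) := by
      rintro ⟨i, j, k⟩
      have hs : (i : ℕ) + (j : ℕ) + (k : ℕ) ≤ 3 * N := by
        have := i.is_le; have := j.is_le; have := k.is_le; omega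
      have he : (i : ℕ) + (j : ℕ) + (k : ℕ)
          + (3 * N - ((i : ℕ) + (j : ℕ) + (k : ℕ))) = 3 * N := by omega
      show algebraMap (MvPolynomial (Fin 2) K) (FractionRing (MvPolynomial (Fin 2) K)) (P 0 ^ (i : ℕ) * P 1 ^ (j : ℕ) * P 2 ^ (k : ℕ)
          * Q ^ (3 * N - ((i : ℕ) + (j : ℕ) + (k : ℕ)))) = _
      rw [map_mul, map_mul, map_mul, map_pow, map_pow, map_pow, map_pow,
        ← h1 0, ← h1 1, ← h1 2]
      conv_rhs => rw [← he]
      ring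
    have hz : (∑ m' : Fin (N+1) × Fin (N+1) × Fin (N+1),
        g m' • (a 0 ^ (m'.1 : ℕ) * a 1 ^ (m'.2.1 : ℕ) * a 2 ^ (m'.2.2 : ℕ)))
          * algebraMap (MvPolynomial (Fin 2) K) (FractionRing (MvPolynomial (Fin 2) K)) Q ^ (3 * N) = 0 := by
      rw [Finset.sum_mul]
      rw [← hg']
      refine Finset.sum_congr rfl fun m' _ => ?_
      rw [hval m', smul_mul_assoc]
    have hQF : algebraMap (MvPolynomial (Fin 2) K) (FractionRing (MvPolynomial (Fin 2) K)) Q ^ (3 * N) ≠ 0 :=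
      pow_ne_zero _ ((map_ne_zero_iff _ hinj).mpr hQ0)
    have hz' : ∑ m' : Fin (N+1) × Fin (N+1) × Fin (N+1),
        g m' • (a 0 ^ (m'.1 : ℕ) * a 1 ^ (m'.2.1 : ℕ) * a 2 ^ (m'.2.2 : ℕ)) = 0 :=
      (mul_eq_zero.mp hz).resolve_right hQF
    set ψ : Fin (N+1) × Fin (N+1) × Fin (N+1) → (Fin 3 →₀ ℕ) := fun m' =>
      Finsupp.single 0 (m'.1 : ℕ) + Finsupp.single 1 (m'.2.1 : ℕ)
        + Finsupp.single 2 (m'.2.2 : ℕ) with hψ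
    have hψval : ∀ m', (ψ m' 0 = (m'.1 : ℕ)) ∧ (ψ m' 1 = (m'.2.1 : ℕ))
        ∧ (ψ m' 2 = (m'.2.2 : ℕ)) := by
      intro m'
      refine ⟨?_, ?_, ?_⟩ <;> simp [hψ, Finsupp.single_apply]
    have hψinj : ∀ m' m'', ψ m' = ψ m'' → m' = m'' := by
      intro m' m'' h
      obtain ⟨a0, a1, a2⟩ := hψval m'
      obtain ⟨b0, b1, b2⟩ := hψval m''
      have e0 : (m'.1 : ℕ) = (m''.1 : ℕ) := by rw [← a0, ← b0, h]
      have e1 : (m'.2.1 : ℕ) = (m''.2.1 : ℕ) := by rw [← a1, ← b1, h]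
      have e2 : (m'.2.2 : ℕ) = (m''.2.2 : ℕ) := by rw [← a2, ← b2, h]
      exact Prod.ext (Fin.ext e0) (Prod.ext (Fin.ext e1) (Fin.ext e2))
    have haev : aeval a (∑ m' : Fin (N+1) × Fin (N+1) × Fin (N+1),
        monomial (ψ m') (g m')) = 0 := by
      rw [map_sum, ← hz']
      refine Finset.sum_congr rfl fun m' _ => ?_
      rw [aeval_monomial, Finsupp.prod_fintype _ _ (fun i => pow_zero _), Fin.prod_univ_three]
      rw [(hψval m').1, (hψval m').2.1, (hψval m').2.2, Algebra.smul_def]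
    have hPP0 : (∑ m' : Fin (N+1) × Fin (N+1) × Fin (N+1), monomial (ψ m') (g m'))
        = (0 : MvPolynomial (Fin 3) K) :=
      hA.eq_zero_of_aeval_eq_zero _ haev
    have := coeff_sum_monomial_eq Finset.univ ψ g (Finset.mem_univ m)
      (fun m'' _ h => hψinj m'' m h)
    rw [hPP0] at this
    simpa using this.symm
  -- cardinality contradiction
  classical
  have hLI' : LinearIndependent K
      (fun m : Fin (N+1) × Fin (N+1) × Fin (N+1) =>
        (⟨v m, hmem m⟩ : restrictDegree (Fin 2) K M)) := by
    apply LinearIndependent.of_comp (restrictDegree (Fin 2) K M).subtype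
    exact hLI
  have hfin : Finite ↥{n : Fin 2 →₀ ℕ | ∀ i, n i ≤ M} := by
    have hinj2 : Function.Injective (fun f : ↥{n : Fin 2 →₀ ℕ | ∀ i, n i ≤ M} =>
        ((⟨f.1 0, Nat.lt_succ_of_le (f.2 0)⟩, ⟨f.1 1, Nat.lt_succ_of_le (f.2 1)⟩)
          : Fin (M+1) × Fin (M+1))) := by
      intro f f' h
      have h0 : f.1 0 = f'.1 0 := congrArg (fun z => (z.1 : ℕ)) h
      have h1 : f.1 1 = f'.1 1 := congrArg (fun z => (z.2 : ℕ)) h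
      apply Subtype.ext
      ext i
      fin_cases i
      · exact h0
      · exact h1
    exact Finite.of_injective _ hinj2
  haveI := hfin
  haveI : Fintype ↥{n : Fin 2 →₀ ℕ | ∀ i, n i ≤ M} := Fintype.ofFinite _
  have hrank : Module.finrank K (restrictDegree (Fin 2) K M)
      = Fintype.card ↥{n : Fin 2 →₀ ℕ | ∀ i, n i ≤ M} :=
    Module.finrank_eq_card_basis (basisRestrictSupport K _)
  have hcard1 : Fintype.card ↥{n : Fin 2 →₀ ℕ | ∀ i, n i ≤ M} ≤ (M+1)^2 := by
    have hinj2 : Function.Injective (fun f : ↥{n : Fin 2 →₀ ℕ | ∀ i, n i ≤ M} =>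
        ((⟨f.1 0, Nat.lt_succ_of_le (f.2 0)⟩, ⟨f.1 1, Nat.lt_succ_of_le (f.2 1)⟩)
          : Fin (M+1) × Fin (M+1))) := by
      intro f f' h
      have h0 : f.1 0 = f'.1 0 := congrArg (fun z => (z.1 : ℕ)) h
      have h1 : f.1 1 = f'.1 1 := congrArg (fun z => (z.2 : ℕ)) h
      apply Subtype.ext
      ext i
      fin_cases i
      · exact h0
      · exact h1
    calc Fintype.card ↥{n : Fin 2 →₀ ℕ | ∀ i, n i ≤ M}
        ≤ Fintype.card (Fin (M+1) × Fin (M+1)) := Fintype.card_le_of_injective _ hinj2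
      _ = (M+1)^2 := by simp [sq]
  have hle := hLI'.fintype_card_le_finrank
  rw [hrank] at hle
  have hbig : Fintype.card (Fin (N+1) × Fin (N+1) × Fin (N+1)) = (N+1)^3 := by
    rw [Fintype.card_prod, Fintype.card_prod, Fintype.card_fin]
    ring
  rw [hbig] at hle
  have hle2 : (N+1)^3 ≤ (M+1)^2 := hle.trans hcard1
  -- arithmetic contradiction
  have e1 : M + 1 ≤ (3*D+1) * N := by
    rw [hM]
    nlinarith [hN1]
  have e2 : (M+1)^2 ≤ ((3*D+1)*N)^2 := Nat.pow_le_pow_left e1 2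
  have e3 : ((3*D+1)*N)^2 = (3*D+1)^2 * N^2 := by ring
  have e4 : N^3 = 9 * ((3*D+1)^2 * N^2) := by
    calc N^3 = N * N^2 := by ring
      _ = 9 * ((3*D+1)^2 * N^2) := by rw [hN]; ring
  have e5 : 0 < (3*D+1)^2 * N^2 := by positivity
  have e6 : N^3 ≤ (N+1)^3 := Nat.pow_le_pow_left (Nat.le_succ N) 3
  rw [e4] at e6
  have c1 : (M+1)^2 ≤ (3*D+1)^2 * N^2 := e2.trans_eq e3
  have c2 : (3*D+1)^2 * N^2 < 9 * ((3*D+1)^2 * N^2) := by nlinarith [e5]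
  have : (N+1)^3 < (N+1)^3 := lt_of_le_of_lt (hle2.trans c1) (c2.trans_le e6)
  exact absurd this (lt_irrefl _)

end Helpers

/-- Let `p` be a prime, `d ≥ p` and `K` a field of characteristic `p`. Then
`H = (x₁^d, x₁^{d-p}x₂^p)` is homogeneous of degree `d` with `rk JH ≤ 1`, while its
components are algebraically independent over `K` (so `trdeg_K K(H) = 2 > rk JH`;
hence the characteristic hypothesis in Proposition `rk JH = trdeg_K K(H)` for rank at
most one cannot be dropped). -/
theorem char_p_homogeneous_example {K : Type*} [Field K]
    (p : ℕ) (hp : p.Prime) [CharP K p] (d : ℕ) (hd : p ≤ d)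
    (H : Fin 2 → MvPolynomial (Fin 2) K)
    (hH : H = ![X 0 ^ d, X 0 ^ (d - p) * X 1 ^ p]) :
    (∀ i, (H i).IsHomogeneous d) ∧ jacRank H ≤ 1 ∧
      AlgebraicIndependent K H ∧ trdegMap H = 2 := by
  have hp0 : 0 < p := hp.pos
  have hd0 : 0 < d := lt_of_lt_of_le hp0 hd
  subst hH
  have hind : AlgebraicIndependent K ![(X 0 : MvPolynomial (Fin 2) K) ^ d,
      X 0 ^ (d - p) * X 1 ^ p] := indep_pows hp0 hd
  refine ⟨?_, ?_, hind, ?_⟩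
  · intro i
    fin_cases i
    · simpa using (isHomogeneous_X K (0 : Fin 2)).pow d
    · simpa [Nat.sub_add_cancel hd] using
        ((isHomogeneous_X K (0 : Fin 2)).pow (d - p)).mul ((isHomogeneous_X K (1 : Fin 2)).pow p)
  · -- jacRank ≤ 1
    show ((jac ![X 0 ^ d, X 0 ^ (d - p) * X 1 ^ p]).map (algebraMap (MvPolynomial (Fin 2) K)
      (FractionRing (MvPolynomial (Fin 2) K)))).rank ≤ 1
    set Mx := (jac ![(X 0 : MvPolynomial (Fin 2) K) ^ d, X 0 ^ (d - p) * X 1 ^ p]).map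
      (algebraMap (MvPolynomial (Fin 2) K) (FractionRing (MvPolynomial (Fin 2) K))) with hMx
    have hder0 : pderiv (1 : Fin 2) ((X 0 : MvPolynomial (Fin 2) K) ^ d) = 0 := by
      rw [X_pow_eq_monomial, pderiv_monomial]
      simp [Finsupp.single_apply]
    have hder1 : pderiv (1 : Fin 2) ((X 0 : MvPolynomial (Fin 2) K) ^ (d - p) * X 1 ^ p) = 0 := by
      rw [X_pow_eq_monomial, X_pow_eq_monomial, monomial_mul, pderiv_monomial]
      simp [Finsupp.single_apply, CharP.cast_eq_zero K p]
    have hcol : ∀ i, Mx i 1 = 0 := by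
      intro i
      fin_cases i
      · show algebraMap (MvPolynomial (Fin 2) K) (FractionRing (MvPolynomial (Fin 2) K))
          (pderiv (1 : Fin 2) ((X 0 : MvPolynomial (Fin 2) K) ^ d)) = 0
        rw [hder0, map_zero]
      · show algebraMap (MvPolynomial (Fin 2) K) (FractionRing (MvPolynomial (Fin 2) K))
          (pderiv (1 : Fin 2) ((X 0 : MvPolynomial (Fin 2) K) ^ (d - p) * X 1 ^ p)) = 0
        rw [hder1, map_zero]
    have hfac : Mx = (Matrix.of fun i (_ : Fin 1) => Mx i 0)
        * (Matrix.of fun (_ : Fin 1) (j : Fin 2) => if j = 0 then (1 : (FractionRing (MvPolynomial (Fin 2) K))) else 0) := by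
      ext i j
      rw [Matrix.mul_apply]
      simp only [Finset.univ_unique, Finset.sum_singleton, Matrix.of_apply]
      fin_cases j
      · simp
      · simp [hcol i]
    rw [hfac]
    exact (Matrix.rank_mul_le_left _ _).trans ((Matrix.rank_le_card_width _).trans (by simp))
  · -- trdeg = 2
    show trdeg K (IntermediateField.adjoin K
      (Set.range fun i => algebraMap (MvPolynomial (Fin 2) K)
        (FractionRing (MvPolynomial (Fin 2) K))
        ((![X 0 ^ d, X 0 ^ (d - p) * X 1 ^ p]) i))) = 2
    set L := IntermediateField.adjoin K
      (Set.range fun i => algebraMap (MvPolynomial (Fin 2) K) (FractionRing (MvPolynomial (Fin 2) K)) ((![X 0 ^ d, X 0 ^ (d - p) * X 1 ^ p]) i)) with hL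
    have hmem : ∀ i : Fin 2,
        algebraMap (MvPolynomial (Fin 2) K) (FractionRing (MvPolynomial (Fin 2) K)) ((![X 0 ^ d, X 0 ^ (d - p) * X 1 ^ p]) i) ∈ L := fun i =>
      IntermediateField.subset_adjoin K _ ⟨i, rfl⟩
    set g : Fin 2 → L := fun i =>
      ⟨algebraMap (MvPolynomial (Fin 2) K) (FractionRing (MvPolynomial (Fin 2) K)) ((![X 0 ^ d, X 0 ^ (d - p) * X 1 ^ p]) i), hmem i⟩ with hg
    have hLval : Function.Injective (L.val) := Subtype.val_injective
    have hcomp : AlgebraicIndependent K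
        ((IsScalarTower.toAlgHom K (MvPolynomial (Fin 2) K) (FractionRing (MvPolynomial (Fin 2) K))) ∘ ![X 0 ^ d, X 0 ^ (d - p) * X 1 ^ p]) :=
      hind.map' (IsFractionRing.injective (MvPolynomial (Fin 2) K) (FractionRing (MvPolynomial (Fin 2) K)))
    have hgind : AlgebraicIndependent K g := by
      apply AlgebraicIndependent.of_comp L.val
      exact hcomp
    haveI hne' : Nonempty { s : Set L // AlgebraicIndependent K ((↑) : s → L) } :=
      ⟨⟨∅, algebraicIndependent_empty⟩⟩
    apply le_antisymm
    · -- upper bound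
      apply ciSup_le
      rintro ⟨s, hs⟩
      show Cardinal.mk s ≤ 2
      by_contra hlt
      push_neg at hlt
      have h3 : ((3 : ℕ) : Cardinal) ≤ Cardinal.mk s := by
        have h2 : ((2 : ℕ) : Cardinal) < Cardinal.mk s := by
          simpa using hlt
        calc ((3 : ℕ) : Cardinal) = Order.succ ((2 : ℕ) : Cardinal) :=
              Cardinal.nat_succ 2
          _ ≤ Cardinal.mk s := Order.succ_le_of_lt h2
      have h5 : Nonempty (Fin 3 ↪ s) := by
        rw [← Cardinal.lift_mk_le']
        rw [Cardinal.mk_fin, Cardinal.lift_natCast, Cardinal.lift_uzero]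
        exact_mod_cast h3
      obtain ⟨e⟩ := h5
      have hthree : AlgebraicIndependent K ((L.val) ∘ (Subtype.val ∘ e)) :=
        (hs.comp e e.injective).map' hLval
      exact not_indep_three _ hthree
    · -- lower bound
      have hne : g 0 ≠ g 1 := fun h => by
        have := hgind.injective h
        simp at this
      have hins : g 0 ∉ ({g 1} : Set L) := by simpa using hne
      have hcard : Cardinal.mk ↥({g 0, g 1} : Set L) = 2 := by
        rw [Cardinal.mk_insert hins, Cardinal.mk_singleton]
        norm_num
      have hrange : Set.range g = ({g 0, g 1} : Set L) := by
        ext z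
        simp only [Set.mem_range, Fin.exists_fin_two, Set.mem_insert_iff,
          Set.mem_singleton_iff]
        exact ⟨fun h => h.elim (fun h => Or.inl h.symm) (fun h => Or.inr h.symm),
          fun h => h.elim (fun h => Or.inl h.symm) (fun h => Or.inr h.symm)⟩
      have hsub : AlgebraicIndependent K ((↑) : ({g 0, g 1} : Set L) → L) := by
        rw [← hrange]
        exact hgind.coe_range
      have hbdd : BddAbove (Set.range fun ι :
          { s : Set L // AlgebraicIndependent K ((↑) : s → L) } => Cardinal.mk ι.1) := by
        refine ⟨Cardinal.mk L, ?_⟩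
        rintro c ⟨ι, rfl⟩
        exact Cardinal.mk_set_le _
      have := le_ciSup hbdd
        (⟨({g 0, g 1} : Set L), hsub⟩ : { s : Set L // AlgebraicIndependent K ((↑) : s → L) })
      rw [hcard] at this
      exact this
end
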